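/- Let 0 ≠ b ∈ P_+, regarded as an element of the extended affine Weyl group Ŵ, let b = π_r s_{j_l}⋯s_{j_1} be a reduced decomposition with λ-sequence {α̃^1,…,α̃^l}, and let 1 ≤ a < i ≤ l. Then exactly one of the following holds: s_{α̃^i}(α̃^a) is a negative affine root, or s_{α̃^i}(α̃^a) = α̃^p for some p < i. In particular, s_{α̃^i}(α̃^a) ∈ R̃_+ if and only if s_{α̃^i}(α̃^a) ∈ {α̃^1,…,α̃^{i−1}}. -/

import Mathlib

open scoped RealInnerProductSpace Classical

noncomputable section

/-- Euclidean space ℝⁿ. -/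
abbrev EV (n : ℕ) := EuclideanSpace ℝ (Fin n)

/-- ν_α = (α,α)/2. -/
def nuu {n : ℕ} (α : EV n) : ℝ := ⟪α, α⟫ / 2

/-- α^∨ = 2α/(α,α). -/
def coroot {n : ℕ} (α : EV n) : EV n := (2 / ⟪α, α⟫) • α

/-- the reflection s_α. -/
def srefl {n : ℕ} (α : EV n) : EV n → EV n :=
  fun z => z - (2 * ⟪z, α⟫ / ⟪α, α⟫) • α

/-- the affine reflection s_ã attached to ã = [α, ν_α j], acting linearly on ℝⁿ × ℝ. -/
def aRefl {n : ℕ} (p : EV n × ℝ) : EV n × ℝ → EV n × ℝ :=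
  fun z => z - (2 * ⟪z.1, p.1⟫ / ⟪p.1, p.1⟫) • p

/-- the translation element b' ∈ Ŵ, b'([z,ζ]) = [z, ζ − (z,b)]. -/
def transl {n : ℕ} (b : EV n) : EV n × ℝ → EV n × ℝ :=
  fun z => (z.1, z.2 - ⟪z.1, b⟫)

/-- extension of a nonaffine transformation to ℝⁿ × ℝ. -/
def affExt {n : ℕ} (w : EV n → EV n) : EV n × ℝ → EV n × ℝ :=
  fun z => (w z.1, z.2)

/-- An irreducible reduced crystallographic root system in ℝⁿ, with a fixed system of
positive/simple roots, normalized so that (α,α) = 2 for short roots; `hishort` is the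
highest short root ϑ and `hiroot` the highest root θ. -/
structure RootCtx (n : ℕ) where
  R : Finset (EV n)
  pos : Finset (EV n)
  simple : Fin n → EV n
  hishort : EV n
  hiroot : EV n
  nonzero : ∀ α ∈ R, α ≠ (0 : EV n)
  neg_mem : ∀ α ∈ R, -α ∈ R
  reduced : ∀ α ∈ R, ∀ t : ℝ, t • α ∈ R → t = 1 ∨ t = -1
  crys : ∀ α ∈ R, ∀ β ∈ R, ∃ m : ℤ, 2 * ⟪β, α⟫ / ⟪α, α⟫ = (m : ℝ)
  reflect_mem : ∀ α ∈ R, ∀ β ∈ R, β - (2 * ⟪β, α⟫ / ⟪α, α⟫) • α ∈ R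
  span_top : Submodule.span ℝ (R : Set (EV n)) = ⊤
  pos_subset : pos ⊆ R
  pos_iff : ∀ α ∈ R, (α ∈ pos ↔ -α ∉ pos)
  simple_pos : ∀ i, simple i ∈ pos
  simple_inj : Function.Injective simple
  pos_sum : ∀ α ∈ pos, ∃ f : Fin n → ℕ, α = ∑ i, (f i : ℝ) • simple i
  irred : ∀ S : Finset (EV n), S ⊆ R → S.Nonempty →
      (∀ α ∈ S, ∀ β ∈ R, β ∉ S → ⟪α, β⟫ = 0) → S = R
  normalized : ∀ α ∈ R, (∀ β ∈ R, ⟪α, α⟫ ≤ ⟪β, β⟫) → ⟪α, α⟫ = 2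
  hishort_pos : hishort ∈ pos
  hishort_short : ⟪hishort, hishort⟫ = 2
  hishort_high : ∀ α ∈ R, ⟪α, α⟫ = 2 →
      ∃ f : Fin n → ℕ, hishort - α = ∑ i, (f i : ℝ) • simple i
  hiroot_pos : hiroot ∈ pos
  hiroot_high : ∀ α ∈ R, ∃ f : Fin n → ℕ, hiroot - α = ∑ i, (f i : ℝ) • simple i

namespace RootCtx

variable {n : ℕ} (c : RootCtx n)

/-- word in the simple reflections of W; the letters are listed in the order of
application (the first letter of the list acts first), so `[i₁, …, i_l]`
represents s_{i_l} ⋯ s_{i_1}. -/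
def wWord (L : List (Fin n)) : EV n → EV n :=
  L.foldl (fun f i => srefl (c.simple i) ∘ f) id

/-- membership in the Weyl group W. -/
def IsWeyl (w : EV n → EV n) : Prop := ∃ L : List (Fin n), w = c.wWord L

/-- λ(w) = {α ∈ R₊ : w(α) ∈ R₋}. -/
def lamW (w : EV n → EV n) : Finset (EV n) :=
  c.pos.filter (fun α => -(w α) ∈ c.pos)

/-- λ_ν(w). -/
def lamWnu (w : EV n → EV n) (ν : ℝ) : Finset (EV n) :=
  (c.lamW w).filter (fun α => nuu α = ν)

/-- the length l(w) = |λ(w)| of w ∈ W. -/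
def lenW (w : EV n → EV n) : ℕ := (c.lamW w).card

/-- ρ_ν = (1/2) Σ_{α ∈ R₊, ν_α = ν} α. -/
def rho (ν : ℝ) : EV n :=
  (1 / 2 : ℝ) • ∑ α ∈ c.pos.filter (fun α => nuu α = ν), α

/-- ρ_ν^∨ = ρ_ν / ν. -/
def rhoCheck (ν : ℝ) : EV n := ν⁻¹ • c.rho ν

/-- the affine root system R̃ ⊂ ℝⁿ × ℝ. -/
def aR : Set (EV n × ℝ) := {p | ∃ α ∈ c.R, ∃ j : ℤ, p = (α, nuu α * j)}

/-- positive affine roots. -/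
def aPos : Set (EV n × ℝ) :=
  {p | p ∈ c.aR ∧ (0 < p.2 ∨ (p.2 = 0 ∧ p.1 ∈ c.pos))}

/-- negative affine roots. -/
def aNeg : Set (EV n × ℝ) := {p | -p ∈ c.aPos}

/-- the affine simple roots α_0, α_1, …, α_n; the index 0 corresponds to
α₀ = [−ϑ, 1]. -/
def asimple : Fin (n + 1) → EV n × ℝ :=
  fun i => if h : i = 0 then (-c.hishort, (1 : ℝ)) else (c.simple (i.pred h), (0 : ℝ))

/-- the affine simple reflections s_0, s_1, …, s_n. -/
def aS (i : Fin (n + 1)) : EV n × ℝ → EV n × ℝ := aRefl (c.asimple i)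

/-- word in the affine simple reflections (letters in order of application). -/
def affWord (L : List (Fin (n + 1))) : EV n × ℝ → EV n × ℝ :=
  L.foldl (fun f i => c.aS i ∘ f) id

/-- the weight lattice P. -/
def PwSet : Set (EV n) :=
  {b | ∀ i, ∃ m : ℤ, 2 * ⟪b, c.simple i⟫ / ⟪c.simple i, c.simple i⟫ = (m : ℝ)}

/-- the dominant weights P₊. -/
def PplusSet : Set (EV n) :=
  {b | b ∈ c.PwSet ∧ ∀ i, 0 ≤ ⟪b, c.simple i⟫}

/-- membership in the extended affine Weyl group Ŵ = W ⋉ P,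
via the normal form w·b' with w ∈ W and b ∈ P. -/
def IsExtW (f : EV n × ℝ → EV n × ℝ) : Prop :=
  ∃ w b, c.IsWeyl w ∧ b ∈ c.PwSet ∧ f = affExt w ∘ transl b

/-- membership in Π = {π ∈ Ŵ : π(R̃₊) = R̃₊}. -/
def IsPi (f : EV n × ℝ → EV n × ℝ) : Prop :=
  c.IsExtW f ∧ f '' c.aPos = c.aPos

/-- the λ-set λ(ŵ) = R̃₊ ∩ ŵ⁻¹(R̃₋) of an affine transformation. -/
def aLam (f : EV n × ℝ → EV n × ℝ) : Set (EV n × ℝ) :=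
  {p | p ∈ c.aPos ∧ f p ∈ c.aNeg}

/-- the ν-part λ_ν(ŵ). -/
def aLamNu (f : EV n × ℝ → EV n × ℝ) (ν : ℝ) : Set (EV n × ℝ) :=
  {p | p ∈ c.aLam f ∧ nuu p.1 = ν}

/-- the length l(ŵ) = |λ(ŵ)|. -/
def aLen (f : EV n × ℝ → EV n × ℝ) : ℕ := (c.aLam f).ncard

/-- `(π, L)` is a reduced decomposition ŵ = π_r s_{i_l} ⋯ s_{i_1}: π ∈ Π and
the word length is minimal among all such presentations of the same element. -/
def IsReducedA (π : EV n × ℝ → EV n × ℝ) (L : List (Fin (n + 1))) : Prop :=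
  c.IsPi π ∧
    ∀ (π' : EV n × ℝ → EV n × ℝ) (L' : List (Fin (n + 1))),
      c.IsPi π' → π' ∘ c.affWord L' = π ∘ c.affWord L → L.length ≤ L'.length

/-- the λ-sequence α̃¹, α̃², … of a word (0-based indexing):
α̃^{k+1} = s_{i_1} s_{i_2} ⋯ s_{i_k}(α_{i_{k+1}}). -/
def lamSeq (L : List (Fin (n + 1))) (k : Fin L.length) : EV n × ℝ :=
  ((L.take k).foldr (fun i f => c.aS i ∘ f) id) (c.asimple (L.get k))

/-- the λ-sequence of a word in W (0-based indexing). -/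
def lamSeqW (L : List (Fin n)) (k : Fin L.length) : EV n :=
  ((L.take k).foldr (fun i f => srefl (c.simple i) ∘ f) id) (c.simple (L.get k))

end RootCtx

/-! Each simple reflection `s_i` permutes the positive affine roots other than `α_i`, so every
positive root that a word `s_{i_l} ⋯ s_{i_1}` makes negative occurs in its λ-sequence. For a
reduced decomposition of `ŵ` this inclusion `λ(ŵ) ⊆ {α̃^1, …, α̃^l}` is an equality between sets
of `l` elements, so the `α̃^k` are distinct positive roots and `s_{i_k} ⋯ s_{i_1}(α̃^a) < 0` for
`a ≤ k`. As `s_{i_k} ⋯ s_{i_1} ∘ s_{α̃^k} = s_{i_{k-1}} ⋯ s_{i_1}`, the word `s_{i_k} ⋯ s_{i_1}`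
sends `β = s_{α̃^k}(α̃^a)` to a negative root; so if `β` is positive it is some `α̃^p` with `p ≤ k`,
and `p = k` is impossible because it would give `α̃^a = -α̃^k < 0`. -/

section Reflections

variable {n : ℕ}

lemma srefl_inner_srefl (α x y : EV n) : ⟪srefl α x, srefl α y⟫ = ⟪x, y⟫ := by
  rcases eq_or_ne α 0 with rfl | hα
  · simp [srefl]
  have hαα : ⟪α, α⟫ ≠ 0 := (real_inner_self_pos.2 hα).ne'
  simp only [srefl, inner_sub_left, inner_sub_right, real_inner_smul_left,
    real_inner_smul_right, real_inner_comm α y]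
  field_simp
  ring

lemma nuu_neg (α : EV n) : nuu (-α) = nuu α := by
  simp [nuu]

lemma nuu_srefl (β α : EV n) : nuu (srefl β α) = nuu α := by
  rw [nuu, srefl_inner_srefl, nuu]

lemma aRefl_fst (p z : EV n × ℝ) : (aRefl p z).1 = srefl p.1 z.1 := rfl

lemma aRefl_sub_smul (q z p : EV n × ℝ) (t : ℝ) :
    aRefl q (z - t • p) = aRefl q z - t • aRefl q p := by
  simp only [aRefl, Prod.fst_sub, Prod.smul_fst, inner_sub_left, real_inner_smul_left]
  module

lemma aRefl_aRefl_aRefl (q p z : EV n × ℝ) :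
    aRefl (aRefl q p) (aRefl q z) = aRefl q (aRefl p z) := by
  change aRefl q z - _ • aRefl q p = _
  rw [aRefl_fst q z, aRefl_fst q p, srefl_inner_srefl, srefl_inner_srefl, ← aRefl_sub_smul]
  rfl

lemma aRefl_self {p : EV n × ℝ} (h : p.1 ≠ 0) : aRefl p p = -p := by
  have hpp : ⟪p.1, p.1⟫ ≠ 0 := (real_inner_self_pos.2 h).ne'
  rw [aRefl, mul_div_assoc, div_self hpp, mul_one]
  module

lemma aRefl_aRefl (p z : EV n × ℝ) : aRefl p (aRefl p z) = z := by
  rcases eq_or_ne p.1 0 with h | h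
  · simp [aRefl, h]
  · change aRefl p (z - _ • p) = z
    rw [aRefl_sub_smul, aRefl_self h, aRefl]
    module

end Reflections

namespace RootCtx

variable {n : ℕ} (c : RootCtx n)

lemma neg_mem_pos_of_notMem_pos {α : EV n} (hα : α ∈ c.R) (h : α ∉ c.pos) : -α ∈ c.pos :=
  not_not.1 (mt (c.pos_iff α hα).2 h)

lemma hishort_mem_R : c.hishort ∈ c.R := c.pos_subset c.hishort_pos

lemma simple_mem_R (k : Fin n) : c.simple k ∈ c.R := c.pos_subset (c.simple_pos k)

lemma srefl_mem_R {β α : EV n} (hβ : β ∈ c.R) (hα : α ∈ c.R) : srefl β α ∈ c.R :=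
  c.reflect_mem β hβ α hα

lemma two_le_inner_self {α : EV n} (hα : α ∈ c.R) : 2 ≤ ⟪α, α⟫ := by
  obtain ⟨β, hβ, hmin⟩ := c.R.exists_min_image (fun γ => ⟪γ, γ⟫) ⟨_, c.hishort_mem_R⟩
  exact c.normalized β hβ hmin ▸ hmin α hα

lemma one_le_nuu {α : EV n} (hα : α ∈ c.R) : 1 ≤ nuu α := by
  have := c.two_le_inner_self hα
  rw [nuu]
  linarith

lemma linearIndependent_simple : LinearIndependent ℝ c.simple := by
  have hpos : ∀ β ∈ c.pos, β ∈ Submodule.span ℝ (Set.range c.simple) := by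
    intro β hβ
    obtain ⟨f, rfl⟩ := c.pos_sum β hβ
    exact Submodule.sum_mem _ fun i _ => Submodule.smul_mem _ _ (Submodule.subset_span ⟨i, rfl⟩)
  have hspan : ⊤ ≤ Submodule.span ℝ (Set.range c.simple) := by
    rw [← c.span_top, Submodule.span_le]
    intro α hα
    by_cases h : α ∈ c.pos
    · exact hpos α h
    · simpa using Submodule.neg_mem _ (hpos _ (c.neg_mem_pos_of_notMem_pos hα h))
  exact linearIndependent_of_top_le_span_of_card_eq_finrank hspan (by simp)

lemma eq_pi_single_of_sum_eq_smul_simple {f : Fin n → ℝ} {k : Fin n} {t : ℝ}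
    (h : ∑ i, f i • c.simple i = t • c.simple k) : f = Pi.single k t := by
  have hsingle : ∑ i, (Pi.single k t : Fin n → ℝ) i • c.simple i = t • c.simple k := by
    simp [Pi.single_apply]
  funext j
  have := Fintype.linearIndependent_iff.1 c.linearIndependent_simple (f - Pi.single k t)
    (by simp only [Pi.sub_apply, sub_smul, Finset.sum_sub_distrib, h, hsingle, sub_self]) j
  exact sub_eq_zero.1 this

lemma inner_simple_hishort_nonneg (k : Fin n) : 0 ≤ ⟪c.simple k, c.hishort⟫ := by
  by_contra! hneg
  set t : ℝ := 2 * ⟪c.hishort, c.simple k⟫ / ⟪c.simple k, c.simple k⟫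
  have ht : t < 0 :=
    div_neg_of_neg_of_pos (by rw [real_inner_comm] at hneg; linarith)
      (real_inner_self_pos.2 (c.nonzero _ (c.simple_mem_R k)))
  have hshort : ⟪srefl (c.simple k) c.hishort, srefl (c.simple k) c.hishort⟫ = 2 := by
    rw [srefl_inner_srefl, c.hishort_short]
  obtain ⟨f, hf⟩ := c.hishort_high _
    (c.srefl_mem_R (c.simple_mem_R k) c.hishort_mem_R) hshort
  have hdiff : ∑ i, (f i : ℝ) • c.simple i = t • c.simple k := by
    rw [← hf]
    exact sub_sub_cancel _ _
  have := congrFun (c.eq_pi_single_of_sum_eq_smul_simple hdiff) k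
  simp only [Pi.single_eq_same] at this
  linarith [(f k).cast_nonneg (α := ℝ)]

lemma inner_hishort_nonneg_of_mem_pos {α : EV n} (hα : α ∈ c.pos) : 0 ≤ ⟪α, c.hishort⟫ := by
  obtain ⟨f, rfl⟩ := c.pos_sum α hα
  rw [sum_inner]
  exact Finset.sum_nonneg fun i _ => by
    rw [real_inner_smul_left]
    exact mul_nonneg (Nat.cast_nonneg _) (c.inner_simple_hishort_nonneg i)

lemma mem_pos_of_inner_hishort_pos {α : EV n} (hα : α ∈ c.R) (h : 0 < ⟪α, c.hishort⟫) :
    α ∈ c.pos := by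
  by_contra hn
  have := c.inner_hishort_nonneg_of_mem_pos (c.neg_mem_pos_of_notMem_pos hα hn)
  rw [inner_neg_left] at this
  linarith

lemma srefl_simple_mem_pos {α : EV n} (hα : α ∈ c.pos) {k : Fin n} (hne : α ≠ c.simple k) :
    srefl (c.simple k) α ∈ c.pos := by
  have hαR : α ∈ c.R := c.pos_subset hα
  by_contra hn
  obtain ⟨f, hf⟩ := c.pos_sum α hα
  obtain ⟨g, hg⟩ := c.pos_sum _ (c.neg_mem_pos_of_notMem_pos
    (c.srefl_mem_R (c.simple_mem_R k) hαR) hn)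
  set t : ℝ := 2 * ⟪α, c.simple k⟫ / ⟪c.simple k, c.simple k⟫
  have hsum : ∑ i, ((f i : ℝ) + g i) • c.simple i = t • c.simple k := by
    simp only [add_smul, Finset.sum_add_distrib, ← hf, ← hg, srefl]
    abel
  have hcoeff := congrFun (c.eq_pi_single_of_sum_eq_smul_simple hsum)
  have hf0 : ∀ i ≠ k, (f i : ℝ) = 0 := fun i hik => by
    have := hcoeff i
    rw [Pi.single_eq_of_ne hik] at this
    linarith [(f i).cast_nonneg (α := ℝ), (g i).cast_nonneg (α := ℝ)]
  have hαk : α = (f k : ℝ) • c.simple k := by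
    rw [hf, Finset.sum_eq_single k (fun i _ hik => by rw [hf0 i hik, zero_smul]) (by simp)]
  rcases c.reduced _ (c.simple_mem_R k) _ (hαk ▸ hαR) with h1 | h1
  · exact hne (by rw [hαk, h1, one_smul])
  · linarith [(f k).cast_nonneg (α := ℝ)]

lemma exists_inner_hishort_eq_nuu_mul {α : EV n} (hα : α ∈ c.R) :
    ∃ m : ℤ, ⟪α, c.hishort⟫ = nuu α * m := by
  obtain ⟨m, hm⟩ := c.crys α hα c.hishort c.hishort_mem_R
  refine ⟨m, ?_⟩
  have hαα : ⟪α, α⟫ ≠ 0 := (real_inner_self_pos.2 (c.nonzero α hα)).ne'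
  rw [← hm, nuu, real_inner_comm]
  field_simp

/-- Here `|α + ϑ|² = 2ν_α + 2(α, ϑ) + 2 ≤ 2 - 2ν_α ≤ 0`. -/
lemma eq_neg_hishort_of_inner_hishort_le {α : EV n} (hα : α ∈ c.R)
    (h : ⟪α, c.hishort⟫ ≤ -2 * nuu α) : α = -c.hishort := by
  have hν := c.one_le_nuu hα
  have hsq : ⟪α + c.hishort, α + c.hishort⟫ = 0 := by
    have hexp : ⟪α + c.hishort, α + c.hishort⟫ = 2 * nuu α + 2 * ⟪α, c.hishort⟫ + 2 := by
      rw [inner_add_left, inner_add_right, inner_add_right, c.hishort_short,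
        real_inner_comm c.hishort α, nuu]
      ring
    linarith [real_inner_self_nonneg (x := α + c.hishort)]
  exact eq_neg_of_add_eq_zero_left (inner_self_eq_zero.1 hsq)

lemma mk_mem_aR {α : EV n} (hα : α ∈ c.R) (j : ℤ) : (α, nuu α * j) ∈ c.aR := ⟨α, hα, j, rfl⟩

lemma fst_mem_R_of_mem_aR {p : EV n × ℝ} (hp : p ∈ c.aR) : p.1 ∈ c.R := by
  obtain ⟨α, hα, j, rfl⟩ := hp
  exact hα

lemma neg_mk (α : EV n) (j : ℤ) : -(α, nuu α * j) = (-α, nuu (-α) * ((-j : ℤ) : ℝ)) := by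
  rw [nuu_neg]
  ext <;> simp

lemma mk_mem_aPos_iff {α : EV n} (hα : α ∈ c.R) (j : ℤ) :
    (α, nuu α * j) ∈ c.aPos ↔ 0 < j ∨ j = 0 ∧ α ∈ c.pos := by
  have hν : 0 < nuu α := one_pos.trans_le (c.one_le_nuu hα)
  simp only [aPos, Set.mem_ofPred_eq, c.mk_mem_aR hα j, true_and, mul_pos_iff_of_pos_left hν,
    mul_eq_zero, hν.ne', false_or, Int.cast_pos, Int.cast_eq_zero]

lemma notMem_aNeg_of_mem_aPos {p : EV n × ℝ} (hp : p ∈ c.aPos) : p ∉ c.aNeg := by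
  rintro ⟨-, hneg⟩
  obtain ⟨hpR, hpos⟩ := hp
  simp only [Prod.snd_neg, Prod.fst_neg, neg_pos, neg_eq_zero] at hneg
  rcases hpos with h | ⟨h0, hα⟩ <;> rcases hneg with h' | ⟨h0', hα'⟩
  · linarith
  · linarith
  · linarith
  · exact (c.pos_iff _ (c.fst_mem_R_of_mem_aR hpR)).1 hα hα'

lemma mem_aPos_or_mem_aNeg_of_mem_aR {p : EV n × ℝ} (hp : p ∈ c.aR) :
    p ∈ c.aPos ∨ p ∈ c.aNeg := by
  obtain ⟨α, hα, j, rfl⟩ := hp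
  simp only [aNeg, Set.mem_ofPred_eq, neg_mk, c.mk_mem_aPos_iff hα,
    c.mk_mem_aPos_iff (c.neg_mem α hα), neg_pos, neg_eq_zero]
  rcases lt_trichotomy j 0 with hj | rfl | hj
  · exact Or.inr (Or.inl hj)
  · by_cases hpos : α ∈ c.pos
    · exact Or.inl (Or.inr ⟨rfl, hpos⟩)
    · exact Or.inr (Or.inr ⟨rfl, c.neg_mem_pos_of_notMem_pos hα hpos⟩)
  · exact Or.inl (Or.inl hj)

lemma asimple_zero : c.asimple 0 = (-c.hishort, 1) := by
  simp [asimple]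

lemma asimple_of_ne_zero {i : Fin (n + 1)} (h : i ≠ 0) :
    c.asimple i = (c.simple (i.pred h), 0) := by
  simp [asimple, h]

lemma nuu_hishort : nuu c.hishort = 1 := by
  rw [nuu, c.hishort_short]
  norm_num

lemma asimple_mem_aPos (i : Fin (n + 1)) : c.asimple i ∈ c.aPos := by
  by_cases h : i = 0
  · have h1 : c.asimple 0 = (-c.hishort, nuu (-c.hishort) * ((1 : ℤ) : ℝ)) := by
      rw [asimple_zero, nuu_neg, nuu_hishort]
      norm_num
    rw [h, h1, c.mk_mem_aPos_iff (c.neg_mem _ c.hishort_mem_R)]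
    exact Or.inl one_pos
  · have h1 : c.asimple i = (c.simple (i.pred h), nuu (c.simple (i.pred h)) * ((0 : ℤ) : ℝ)) := by
      rw [asimple_of_ne_zero c h]
      simp
    rw [h1, c.mk_mem_aPos_iff (c.simple_mem_R _)]
    exact Or.inr ⟨rfl, c.simple_pos _⟩

lemma aS_zero_apply (p : EV n × ℝ) :
    c.aS 0 p = (srefl c.hishort p.1, p.2 + ⟪p.1, c.hishort⟫) := by
  change p - _ • c.asimple 0 = _
  rw [asimple_zero, inner_neg_right, inner_neg_neg, c.hishort_short]
  refine Prod.ext ?_ ?_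
  · simp only [Prod.fst_sub, Prod.smul_fst, srefl, c.hishort_short]
    module
  · simp only [Prod.snd_sub, Prod.smul_snd, smul_eq_mul]
    ring

lemma aS_apply_of_ne_zero {i : Fin (n + 1)} (h : i ≠ 0) (p : EV n × ℝ) :
    c.aS i p = (srefl (c.simple (i.pred h)) p.1, p.2) := by
  simp only [aS, aRefl, c.asimple_of_ne_zero h]
  ext <;> simp [srefl]

lemma inner_srefl_hishort (α : EV n) : ⟪srefl c.hishort α, c.hishort⟫ = -⟪α, c.hishort⟫ := by
  simp only [srefl, inner_sub_left, real_inner_smul_left, c.hishort_short]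
  ring

lemma aS_zero_mk {α : EV n} {m : ℤ} (hm : ⟪α, c.hishort⟫ = nuu α * m) (j : ℤ) :
    c.aS 0 (α, nuu α * j) = (srefl c.hishort α, nuu (srefl c.hishort α) * ((j + m : ℤ) : ℝ)) := by
  rw [aS_zero_apply, nuu_srefl, hm]
  push_cast
  congr 1
  ring

lemma aS_mk_of_ne_zero {i : Fin (n + 1)} (h : i ≠ 0) (α : EV n) (j : ℤ) :
    c.aS i (α, nuu α * j) =
      (srefl (c.simple (i.pred h)) α, nuu (srefl (c.simple (i.pred h)) α) * j) := by
  rw [aS_apply_of_ne_zero c h, nuu_srefl]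

lemma aS_mem_aR (i : Fin (n + 1)) {p : EV n × ℝ} (hp : p ∈ c.aR) : c.aS i p ∈ c.aR := by
  obtain ⟨α, hα, j, rfl⟩ := hp
  by_cases h : i = 0
  · obtain ⟨m, hm⟩ := c.exists_inner_hishort_eq_nuu_mul hα
    rw [h, c.aS_zero_mk hm]
    exact c.mk_mem_aR (c.srefl_mem_R c.hishort_mem_R hα) _
  · rw [c.aS_mk_of_ne_zero h]
    exact c.mk_mem_aR (c.srefl_mem_R (c.simple_mem_R _) hα) _

lemma aS_zero_mem_aPos {p : EV n × ℝ} (hp : p ∈ c.aPos) (hne : p ≠ c.asimple 0) :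
    c.aS 0 p ∈ c.aPos := by
  obtain ⟨α, hα, j, rfl⟩ := hp.1
  obtain ⟨m, hm⟩ := c.exists_inner_hishort_eq_nuu_mul hα
  have hν : 0 < nuu α := one_pos.trans_le (c.one_le_nuu hα)
  rw [c.mk_mem_aPos_iff hα] at hp
  rw [c.aS_zero_mk hm, c.mk_mem_aPos_iff (c.srefl_mem_R c.hishort_mem_R hα)]
  have hm_nonneg : j = 0 → 0 ≤ m := fun hj => by
    have := c.inner_hishort_nonneg_of_mem_pos ((hp.resolve_left (by omega)).2)
    rw [hm] at this
    exact_mod_cast nonneg_of_mul_nonneg_right this hν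
  rcases lt_trichotomy (j + m) 0 with hlt | heq | hgt
  · have hj : 0 < j := hp.elim id fun ⟨hj, _⟩ => absurd (hm_nonneg hj) (by omega)
    have hα' : α = -c.hishort := c.eq_neg_hishort_of_inner_hishort_le hα (by
      have hm2 : (m : ℝ) ≤ -2 := by exact_mod_cast (by omega : m ≤ -2)
      rw [hm]
      nlinarith)
    subst hα'
    have hm' : m = -2 := by
      rw [inner_neg_left, c.hishort_short, nuu_neg, c.nuu_hishort] at hm
      exact_mod_cast (by linarith : (m : ℝ) = -2)
    refine absurd ?_ hne
    rw [asimple_zero, (by omega : j = 1), nuu_neg, c.nuu_hishort]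
    norm_num
  · refine Or.inr ⟨heq, ?_⟩
    rcases hp with hj | ⟨rfl, hpos⟩
    · apply c.mem_pos_of_inner_hishort_pos (c.srefl_mem_R c.hishort_mem_R hα)
      rw [inner_srefl_hishort, hm]
      have : (m : ℝ) < 0 := by exact_mod_cast (by omega : m < 0)
      nlinarith
    · have hm0 : ⟪α, c.hishort⟫ = 0 := by
        rw [hm, (by omega : m = 0)]
        simp
      simpa [srefl, hm0] using hpos
  · exact Or.inl hgt

lemma aS_mem_aPos (i : Fin (n + 1)) {p : EV n × ℝ} (hp : p ∈ c.aPos) (hne : p ≠ c.asimple i) :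
    c.aS i p ∈ c.aPos := by
  by_cases h : i = 0
  · subst h
    exact c.aS_zero_mem_aPos hp hne
  obtain ⟨α, hα, j, rfl⟩ := hp.1
  rw [c.mk_mem_aPos_iff hα] at hp
  rw [c.aS_mk_of_ne_zero h, c.mk_mem_aPos_iff (c.srefl_mem_R (c.simple_mem_R _) hα)]
  refine hp.imp_right fun ⟨hj, hpos⟩ => ⟨hj, c.srefl_simple_mem_pos hpos fun hαk => hne ?_⟩
  rw [c.asimple_of_ne_zero h, hαk, hj]
  simp

def affWordInv (L : List (Fin (n + 1))) : EV n × ℝ → EV n × ℝ :=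
  L.foldr (fun i f => c.aS i ∘ f) id

lemma aS_aS (i : Fin (n + 1)) (z : EV n × ℝ) : c.aS i (c.aS i z) = z := aRefl_aRefl _ _

lemma affWord_cons (i : Fin (n + 1)) (L : List (Fin (n + 1))) :
    c.affWord (i :: L) = c.affWord L ∘ c.aS i := by
  suffices h : ∀ g, L.foldl (fun f i => c.aS i ∘ f) g = c.affWord L ∘ g from h (c.aS i ∘ id)
  induction L with
  | nil => exact fun _ => rfl
  | cons j L ih =>
    intro g
    rw [List.foldl_cons, ih]
    change _ = L.foldl _ (c.aS j ∘ id) ∘ g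
    rw [ih]
    rfl

lemma affWord_append (L M : List (Fin (n + 1))) :
    c.affWord (L ++ M) = c.affWord M ∘ c.affWord L := by
  induction L with
  | nil => rfl
  | cons i L ih => rw [List.cons_append, affWord_cons, affWord_cons, ih]; rfl

lemma affWordInv_cons (i : Fin (n + 1)) (L : List (Fin (n + 1))) :
    c.affWordInv (i :: L) = c.aS i ∘ c.affWordInv L := rfl

lemma affWordInv_append (L M : List (Fin (n + 1))) :
    c.affWordInv (L ++ M) = c.affWordInv L ∘ c.affWordInv M := by
  induction L with
  | nil => rfl
  | cons i L ih => rw [List.cons_append, affWordInv_cons, affWordInv_cons, ih]; rfl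

lemma affWordInv_affWord (L : List (Fin (n + 1))) (z : EV n × ℝ) :
    c.affWordInv L (c.affWord L z) = z := by
  induction L generalizing z with
  | nil => rfl
  | cons i L ih =>
    rw [affWord_cons, affWordInv_cons, Function.comp_apply, Function.comp_apply, ih, aS_aS]

lemma affWord_affWordInv (L : List (Fin (n + 1))) (z : EV n × ℝ) :
    c.affWord L (c.affWordInv L z) = z := by
  induction L generalizing z with
  | nil => rfl
  | cons i L ih =>
    rw [affWord_cons, affWordInv_cons, Function.comp_apply, Function.comp_apply, aS_aS, ih]

lemma affWord_mem_aR (L : List (Fin (n + 1))) {p : EV n × ℝ} (hp : p ∈ c.aR) :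
    c.affWord L p ∈ c.aR := by
  induction L generalizing p with
  | nil => exact hp
  | cons i L ih =>
    rw [affWord_cons]
    exact ih (c.aS_mem_aR i hp)

lemma affWordInv_mem_aR (L : List (Fin (n + 1))) {p : EV n × ℝ} (hp : p ∈ c.aR) :
    c.affWordInv L p ∈ c.aR := by
  induction L with
  | nil => exact hp
  | cons i L ih => exact c.aS_mem_aR i ih

lemma aRefl_affWordInv (L : List (Fin (n + 1))) (p z : EV n × ℝ) :
    aRefl (c.affWordInv L p) z = c.affWordInv L (aRefl p (c.affWord L z)) := by
  induction L generalizing p z with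
  | nil => rfl
  | cons i L ih =>
    simp only [affWordInv_cons, affWord_cons, Function.comp_apply]
    rw [← ih]
    conv_lhs => rw [← c.aS_aS i z]
    exact aRefl_aRefl_aRefl _ _ _

lemma lamSeq_eq_affWordInv (L : List (Fin (n + 1))) (k : Fin L.length) :
    c.lamSeq L k = c.affWordInv (L.take k) (c.asimple (L.get k)) := rfl

lemma lamSeq_mem_aR (L : List (Fin (n + 1))) (k : Fin L.length) : c.lamSeq L k ∈ c.aR :=
  c.affWordInv_mem_aR _ (c.asimple_mem_aPos _).1

lemma lamSeq_cons_succ (i : Fin (n + 1)) (L : List (Fin (n + 1))) (k : Fin L.length) :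
    c.lamSeq (i :: L) k.succ = c.aS i (c.lamSeq L k) := rfl

lemma lamSeq_take (L : List (Fin (n + 1))) (m : ℕ) (k : Fin (L.take m).length) :
    c.lamSeq (L.take m) k = c.lamSeq L (Fin.castLE (List.length_take_le' m L) k) := by
  have hk : (k : ℕ) ≤ m := k.isLt.le.trans (List.length_take_le m L)
  simp only [lamSeq_eq_affWordInv, List.take_take, Fin.val_castLE, List.get_eq_getElem,
    List.getElem_take, min_eq_left hk]

lemma lamSeq_drop (L : List (Fin (n + 1))) (m : ℕ) (k : Fin (L.drop m).length) :
    c.lamSeq L ⟨m + k, by have := k.isLt; simp only [List.length_drop] at this; omega⟩ =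
      c.affWordInv (L.take m) (c.lamSeq (L.drop m) k) := by
  simp only [lamSeq_eq_affWordInv, List.take_add, affWordInv_append, List.get_eq_getElem,
    List.getElem_drop, Function.comp_apply]

/-- `s_{α̃^{k+1}}` is the conjugate of `s_{i_{k+1}}` by `s_{i_1} ⋯ s_{i_k}`. -/
lemma affWord_take_succ_aRefl_lamSeq (L : List (Fin (n + 1))) (k : Fin L.length)
    (z : EV n × ℝ) :
    c.affWord (L.take (k + 1)) (aRefl (c.lamSeq L k) z) = c.affWord (L.take k) z := by
  rw [List.take_add_one, List.getElem?_eq_getElem k.isLt, Option.toList_some, affWord_append,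
    lamSeq_eq_affWordInv, aRefl_affWordInv, Function.comp_apply, affWord_affWordInv]
  exact c.aS_aS _ _

lemma exists_lamSeq_eq_of_affWord_mem_aNeg (L : List (Fin (n + 1))) {p : EV n × ℝ}
    (hp : p ∈ c.aPos) (h : c.affWord L p ∈ c.aNeg) : ∃ k, c.lamSeq L k = p := by
  induction L generalizing p with
  | nil => exact absurd h (c.notMem_aNeg_of_mem_aPos hp)
  | cons i L ih =>
    by_cases hpi : p = c.asimple i
    · exact ⟨0, hpi.symm⟩
    · rw [affWord_cons] at h
      obtain ⟨k, hk⟩ := ih (c.aS_mem_aPos i hp hpi) h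
      exact ⟨k.succ, by rw [lamSeq_cons_succ, hk, aS_aS]⟩

lemma aRefl_lamSeq_mem_aR (L : List (Fin (n + 1))) (k : Fin L.length) {p : EV n × ℝ}
    (hp : p ∈ c.aR) : aRefl (c.lamSeq L k) p ∈ c.aR := by
  rw [lamSeq_eq_affWordInv, aRefl_affWordInv]
  exact c.affWordInv_mem_aR _ (c.aS_mem_aR _ (c.affWord_mem_aR _ hp))

section Reduced

variable {π f : EV n × ℝ → EV n × ℝ} {L : List (Fin (n + 1))}

lemma mem_aNeg_of_isPi_apply_mem_aNeg (hπ : c.IsPi π) {q : EV n × ℝ} (hq : q ∈ c.aR)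
    (h : π q ∈ c.aNeg) : q ∈ c.aNeg :=
  (c.mem_aPos_or_mem_aNeg_of_mem_aR hq).resolve_left fun hpos =>
    c.notMem_aNeg_of_mem_aPos (hπ.2 ▸ Set.mem_image_of_mem π hpos) h

lemma aLam_subset_range_lamSeq (hπ : c.IsPi π) (hdec : f = π ∘ c.affWord L) :
    c.aLam f ⊆ Set.range (c.lamSeq L) := by
  rintro p ⟨hp, hfp⟩
  rw [hdec] at hfp
  exact c.exists_lamSeq_eq_of_affWord_mem_aNeg L hp
    (c.mem_aNeg_of_isPi_apply_mem_aNeg hπ (c.affWord_mem_aR L hp.1) hfp)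

lemma aLam_eq_range_lamSeq (hπ : c.IsPi π) (hdec : f = π ∘ c.affWord L)
    (hred : L.length = c.aLen f) : c.aLam f = Set.range (c.lamSeq L) := by
  refine Set.eq_of_subset_of_ncard_le (c.aLam_subset_range_lamSeq hπ hdec) ?_
    (Set.finite_range _)
  rw [aLen] at hred
  rw [← hred, ← Set.image_univ]
  exact (Set.ncard_image_le Set.finite_univ).trans (by simp)

lemma lamSeq_injective (hπ : c.IsPi π) (hdec : f = π ∘ c.affWord L)
    (hred : L.length = c.aLen f) : Function.Injective (c.lamSeq L) := by
  have hcard : (c.lamSeq L '' Set.univ).ncard = (Set.univ : Set (Fin L.length)).ncard := by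
    rw [Set.image_univ, ← c.aLam_eq_range_lamSeq hπ hdec hred, ← aLen, ← hred]
    simp
  exact Set.injOn_univ.1 ((Set.ncard_image_iff Set.finite_univ).1 hcard)

lemma lamSeq_mem_aLam (hπ : c.IsPi π) (hdec : f = π ∘ c.affWord L)
    (hred : L.length = c.aLen f) (k : Fin L.length) : c.lamSeq L k ∈ c.aLam f :=
  c.aLam_eq_range_lamSeq hπ hdec hred ▸ Set.mem_range_self k

/-- Otherwise the letters after the `k`-th would make it negative again, and `α̃^a` would recur
later in the λ-sequence. -/
lemma affWord_take_lamSeq_mem_aNeg (hπ : c.IsPi π) (hdec : f = π ∘ c.affWord L)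
    (hred : L.length = c.aLen f) {a k : Fin L.length} (hak : a < k) :
    c.affWord (L.take k) (c.lamSeq L a) ∈ c.aNeg := by
  have hq := c.affWord_mem_aR (L.take k) (c.lamSeq_mem_aR L a)
  refine (c.mem_aPos_or_mem_aNeg_of_mem_aR hq).resolve_left fun hpos => ?_
  have hfull := (c.lamSeq_mem_aLam hπ hdec hred a).2
  have hsplit : c.affWord L = c.affWord (L.drop k) ∘ c.affWord (L.take k) := by
    rw [← affWord_append, List.take_append_drop]
  rw [hdec, Function.comp_apply, hsplit, Function.comp_apply] at hfull
  obtain ⟨j, hj⟩ := c.exists_lamSeq_eq_of_affWord_mem_aNeg _ hpos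
    (c.mem_aNeg_of_isPi_apply_mem_aNeg hπ (c.affWord_mem_aR _ hq) hfull)
  have hidx : (k : ℕ) + j = a := congrArg Fin.val (c.lamSeq_injective hπ hdec hred
    ((c.lamSeq_drop L k j).trans (by rw [hj, affWordInv_affWord])))
  omega

lemma exists_lt_lamSeq_eq_aRefl (hπ : c.IsPi π) (hdec : f = π ∘ c.affWord L)
    (hred : L.length = c.aLen f) {a k : Fin L.length} (hak : a < k)
    (hpos : aRefl (c.lamSeq L k) (c.lamSeq L a) ∈ c.aPos) :
    ∃ p < k, c.lamSeq L p = aRefl (c.lamSeq L k) (c.lamSeq L a) := by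
  have hneg : c.affWord (L.take (k + 1)) (aRefl (c.lamSeq L k) (c.lamSeq L a)) ∈ c.aNeg := by
    rw [affWord_take_succ_aRefl_lamSeq]
    exact c.affWord_take_lamSeq_mem_aNeg hπ hdec hred hak
  obtain ⟨j, hj⟩ := c.exists_lamSeq_eq_of_affWord_mem_aNeg _ hpos hneg
  rw [lamSeq_take] at hj
  refine ⟨_, lt_of_le_of_ne ?_ fun hjk => ?_, hj⟩
  · have := j.isLt
    simp only [List.length_take] at this
    rw [Fin.le_def, Fin.val_castLE]
    omega
  · rw [hjk] at hj
    have hfst := c.nonzero _ (c.fst_mem_R_of_mem_aR (c.lamSeq_mem_aR L k))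
    have ha : c.lamSeq L a = -c.lamSeq L k :=
      calc c.lamSeq L a = aRefl (c.lamSeq L k) (aRefl (c.lamSeq L k) (c.lamSeq L a)) :=
            (aRefl_aRefl _ _).symm
        _ = -c.lamSeq L k := by rw [← hj, aRefl_self hfst]
    refine c.notMem_aNeg_of_mem_aPos (c.lamSeq_mem_aLam hπ hdec hred a).1 ?_
    rw [aNeg, Set.mem_ofPred_eq, ha, neg_neg]
    exact (c.lamSeq_mem_aLam hπ hdec hred k).1

end Reduced

end RootCtx

open RootCtx in
theorem lamSeq_reflection_dichotomy_general {n : ℕ} (c : RootCtx n)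
    (b : EV n)
    (π : EV n × ℝ → EV n × ℝ) (L : List (Fin (n + 1)))
    (hπ : c.IsPi π) (hdec : transl b = π ∘ c.affWord L)
    (hred : L.length = c.aLen (transl b))
    (a i : Fin L.length) (hai : a < i) :
    Xor' (aRefl (c.lamSeq L i) (c.lamSeq L a) ∈ c.aNeg)
         (∃ p : Fin L.length, p < i ∧
            c.lamSeq L p = aRefl (c.lamSeq L i) (c.lamSeq L a)) ∧
    (aRefl (c.lamSeq L i) (c.lamSeq L a) ∈ c.aPos ↔
      ∃ p : Fin L.length, p < i ∧
        c.lamSeq L p = aRefl (c.lamSeq L i) (c.lamSeq L a)) := by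
  set β := aRefl (c.lamSeq L i) (c.lamSeq L a)
  have hpos_iff : β ∈ c.aPos ↔ ∃ p < i, c.lamSeq L p = β :=
    ⟨c.exists_lt_lamSeq_eq_aRefl hπ hdec hred hai,
      fun ⟨p, _, hp⟩ => hp ▸ (c.lamSeq_mem_aLam hπ hdec hred p).1⟩
  refine ⟨?_, hpos_iff⟩
  rw [← hpos_iff]
  rcases c.mem_aPos_or_mem_aNeg_of_mem_aR (c.aRefl_lamSeq_mem_aR L i (c.lamSeq_mem_aR L a))
    with h | h
  · exact Or.inr ⟨h, c.notMem_aNeg_of_mem_aPos h⟩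
  · exact Or.inl ⟨h, fun h' => c.notMem_aNeg_of_mem_aPos h' h⟩

open RootCtx in
/-- Let 0 ≠ b ∈ P₊ with a reduced decomposition b = π_r s_{j_l}⋯s_{j_1}
in Ŵ and λ-sequence {α̃¹,…,α̃^l}, and let a < i.  Then exactly one of the following
holds: s_{α̃^i}(α̃^a) is a negative affine root, or s_{α̃^i}(α̃^a) = α̃^p for some p < i.
In particular, s_{α̃^i}(α̃^a) ∈ R̃₊ iff s_{α̃^i}(α̃^a) ∈ {α̃¹,…,α̃^{i−1}}. -/
theorem lamSeq_reflection_dichotomy {n : ℕ} (c : RootCtx n)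
    (b : EV n) (hb : b ∈ c.PplusSet) (hb0 : b ≠ 0)
    (π : EV n × ℝ → EV n × ℝ) (L : List (Fin (n + 1)))
    (hπ : c.IsPi π) (hdec : transl b = π ∘ c.affWord L)
    (hred : L.length = c.aLen (transl b))
    (a i : Fin L.length) (hai : a < i) :
    Xor' (aRefl (c.lamSeq L i) (c.lamSeq L a) ∈ c.aNeg)
         (∃ p : Fin L.length, p < i ∧
            c.lamSeq L p = aRefl (c.lamSeq L i) (c.lamSeq L a)) ∧
    (aRefl (c.lamSeq L i) (c.lamSeq L a) ∈ c.aPos ↔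
      ∃ p : Fin L.length, p < i ∧
        c.lamSeq L p = aRefl (c.lamSeq L i) (c.lamSeq L a)) :=
  lamSeq_reflection_dichotomy_general c b π L hπ hdec hred a i hai
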